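/- Let u(t) = ∑_{n=0}^{N−1} a(t − nT − T_a/2) with a even, a supported in [−T_a/2, T_a/2], 0 < T_a < T, ∫|a|² = 1/N, and ∫ t²|a(t)|² dt ≤ T_a²/(4N). Then the time dispersion of u satisfies T²(N²−1)/12 ≤ ΔT² ≤ T²(N²−1)/12 + T_a²/4. -/
import Mathlib

open MeasureTheory Finset

private lemma sum_range_cast (N : ℕ) : ∑ n ∈ Finset.range N, (n : ℝ) = N * (N - 1) / 2 := by
  induction N with
  | zero => simp
  | succ k ih => rw [Finset.sum_range_succ, ih]; push_cast; ring

private lemma sum_range_sq_cast (N : ℕ) :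
    ∑ n ∈ Finset.range N, (n : ℝ) ^ 2 = N * (N - 1) * (2 * N - 1) / 6 := by
  induction N with
  | zero => simp
  | succ k ih => rw [Finset.sum_range_succ, ih]; push_cast; ring

private lemma sum_center_sq (N : ℕ) (T : ℝ) :
    ∑ n ∈ Finset.range N, (T * ((N : ℝ) - 1) / 2 - (n : ℝ) * T) ^ 2
      = T ^ 2 * (N * ((N : ℝ) ^ 2 - 1)) / 12 := by
  have h : ∀ n ∈ Finset.range N,
      (T * ((N : ℝ) - 1) / 2 - (n : ℝ) * T) ^ 2
        = T ^ 2 * (n : ℝ) ^ 2 - (T ^ 2 * ((N : ℝ) - 1)) * (n : ℝ)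
          + T ^ 2 * ((N : ℝ) - 1) ^ 2 / 4 := by
    intro n _; ring
  rw [Finset.sum_congr rfl h]
  rw [Finset.sum_add_distrib, Finset.sum_sub_distrib, ← Finset.mul_sum, ← Finset.mul_sum,
    Finset.sum_const, Finset.card_range, sum_range_cast, sum_range_sq_cast]
  ring

theorem ddop_time_dispersion_bounds
    (N : ℕ) (hN : 1 ≤ N) (T Ta : ℝ) (hTa : 0 < Ta) (hTaT : Ta < T)
    (a : ℝ → ℂ)
    (ha_even : ∀ t : ℝ, a (-t) = a t)
    (ha_int : Integrable (fun t : ℝ => ‖a t‖ ^ 2))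
    (ha2_int : Integrable (fun t : ℝ => t ^ 2 * ‖a t‖ ^ 2))
    (ha_supp : ∀ t : ℝ, Ta / 2 < |t| → a t = 0)
    (ha_energy : (∫ t : ℝ, ‖a t‖ ^ 2) = 1 / (N : ℝ))
    (ha_moment : (∫ t : ℝ, t ^ 2 * ‖a t‖ ^ 2) ≤ Ta ^ 2 / (4 * (N : ℝ)))
    (u : ℝ → ℂ)
    (hu : u = fun t => ∑ n ∈ Finset.range N, a (t - (n : ℝ) * T - Ta / 2)) :
    T ^ 2 * ((N : ℝ) ^ 2 - 1) / 12
        ≤ (∫ t : ℝ, (t - (T * ((N : ℝ) - 1) + Ta) / 2) ^ 2 * ‖u t‖ ^ 2) ∧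
    (∫ t : ℝ, (t - (T * ((N : ℝ) - 1) + Ta) / 2) ^ 2 * ‖u t‖ ^ 2)
        ≤ T ^ 2 * ((N : ℝ) ^ 2 - 1) / 12 + Ta ^ 2 / 4 := by
  have hNpos : (0 : ℝ) < N := by exact_mod_cast Nat.lt_of_lt_of_le Nat.zero_lt_one hN
  set c : ℝ := (T * ((N : ℝ) - 1) + Ta) / 2 with hc
  set M : ℝ := ∫ t : ℝ, t ^ 2 * ‖a t‖ ^ 2 with hM
  -- integrability of t * ‖a t‖^2
  have ha1_int : Integrable (fun t : ℝ => t * ‖a t‖ ^ 2) := by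
    refine ha_int.const_mul (Ta / 2) |>.mono'
      ((continuous_id.aestronglyMeasurable).mul ha_int.aestronglyMeasurable) ?_
    filter_upwards with t
    rcases le_or_gt (|t|) (Ta / 2) with h | h
    · have : ‖t * ‖a t‖ ^ 2‖ = |t| * ‖a t‖ ^ 2 := by
        rw [Real.norm_eq_abs, abs_mul, abs_of_nonneg (by positivity : (0:ℝ) ≤ ‖a t‖ ^ 2)]
      rw [this]
      exact mul_le_mul_of_nonneg_right h (by positivity)
    · simp [ha_supp t h]
  -- odd integral is zero
  have hodd : (∫ t : ℝ, t * ‖a t‖ ^ 2) = 0 := by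
    have h1 : (∫ t : ℝ, (-t) * ‖a (-t)‖ ^ 2) = ∫ t : ℝ, t * ‖a t‖ ^ 2 := by
      exact integral_neg_eq_self (fun s : ℝ => s * ‖a s‖ ^ 2) volume
    have h2 : (∫ t : ℝ, (-t) * ‖a (-t)‖ ^ 2) = - ∫ t : ℝ, t * ‖a t‖ ^ 2 := by
      simp only [ha_even]
      rw [← integral_neg]
      congr 1; funext t; ring
    linarith [h1.symm.trans h2]
  have hMnonneg : 0 ≤ M := by
    apply integral_nonneg; intro t; positivity
  -- general weighted integrability
  have hw_int : ∀ e : ℝ, Integrable (fun s : ℝ => (s - e) ^ 2 * ‖a s‖ ^ 2) := by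
    intro e
    have : (fun s : ℝ => (s - e) ^ 2 * ‖a s‖ ^ 2)
        = fun s => s ^ 2 * ‖a s‖ ^ 2 - (2 * e) * (s * ‖a s‖ ^ 2) + e ^ 2 * ‖a s‖ ^ 2 := by
      funext s; ring
    rw [this]
    exact ((ha2_int.sub (ha1_int.const_mul _)).add (ha_int.const_mul _))
  -- value of weighted integral
  have hw_val : ∀ e : ℝ, (∫ s : ℝ, (s - e) ^ 2 * ‖a s‖ ^ 2) = M + e ^ 2 / N := by
    intro e
    have heq : (fun s : ℝ => (s - e) ^ 2 * ‖a s‖ ^ 2)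
        = fun s => s ^ 2 * ‖a s‖ ^ 2 - (2 * e) * (s * ‖a s‖ ^ 2) + e ^ 2 * ‖a s‖ ^ 2 := by
      funext s; ring
    have hA : (∫ s : ℝ, (s ^ 2 * ‖a s‖ ^ 2 - 2 * e * (s * ‖a s‖ ^ 2) + e ^ 2 * ‖a s‖ ^ 2))
        = (∫ s : ℝ, (s ^ 2 * ‖a s‖ ^ 2 - 2 * e * (s * ‖a s‖ ^ 2))) + ∫ s : ℝ, e ^ 2 * ‖a s‖ ^ 2 :=
      integral_add (by exact ha2_int.sub (ha1_int.const_mul _)) (by exact ha_int.const_mul _)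
    have hB : (∫ s : ℝ, (s ^ 2 * ‖a s‖ ^ 2 - 2 * e * (s * ‖a s‖ ^ 2)))
        = (∫ s : ℝ, s ^ 2 * ‖a s‖ ^ 2) - ∫ s : ℝ, 2 * e * (s * ‖a s‖ ^ 2) :=
      integral_sub ha2_int (by exact ha1_int.const_mul _)
    rw [heq, hA, hB, integral_const_mul, integral_const_mul, hodd, ha_energy, ← hM]
    ring
  -- the summand functions
  set b : ℕ → ℝ := fun n => (n : ℝ) * T + Ta / 2 with hb
  set F : ℕ → ℝ → ℝ := fun n t => (t - c) ^ 2 * ‖a (t - b n)‖ ^ 2 with hF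
  have hF_shift : ∀ n, F n = fun t => (fun s => (s - (c - b n)) ^ 2 * ‖a s‖ ^ 2) (t - b n) := by
    intro n; funext t; simp only [hF]; ring_nf
  have hF_int : ∀ n, Integrable (F n) := by
    intro n; rw [hF_shift n]; exact (hw_int (c - b n)).comp_sub_right (b n)
  have hF_val : ∀ n, (∫ t : ℝ, F n t) = M + (c - b n) ^ 2 / N := by
    intro n
    rw [hF_shift n, integral_sub_right_eq_self (fun s => (s - (c - b n)) ^ 2 * ‖a s‖ ^ 2) (b n),
      hw_val]
  -- pointwise: ‖u t‖^2 splits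
  have hpt : ∀ t : ℝ, (t - c) ^ 2 * ‖u t‖ ^ 2 = ∑ n ∈ Finset.range N, F n t := by
    intro t
    have hx : ∀ m n : ℕ, m ≠ n → a (t - b m) ≠ 0 → a (t - b n) = 0 := by
      intro m n hmn hm
      apply ha_supp
      have h1 : |t - b m| ≤ Ta / 2 := by
        by_contra h
        exact hm (ha_supp _ (lt_of_not_ge h))
      have hdist : T ≤ |(t - b n) - (t - b m)| := by
        have : (t - b n) - (t - b m) = ((m : ℝ) - n) * T := by simp [hb]; ring
        rw [this, abs_mul, abs_of_pos (lt_trans hTa hTaT)]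
        have h1le : (1 : ℝ) ≤ |(m : ℝ) - (n : ℝ)| := by
          have : ((m : ℤ) - n) ≠ 0 := sub_ne_zero.mpr (by exact_mod_cast hmn)
          have := Int.one_le_abs this
          calc (1:ℝ) ≤ |((m : ℤ) - n : ℤ)| := by exact_mod_cast this
            _ = |(m : ℝ) - n| := by push_cast; rfl
        nlinarith [lt_trans hTa hTaT]
      have := abs_sub_abs_le_abs_sub (t - b n) (t - b m)
      have : T - Ta / 2 ≤ |t - b n| := by
        have h2 := abs_sub_abs_le_abs_sub ((t - b n) - (t - b m)) (t - b n)
        -- simpler: |t-bn| ≥ |(t-bn)-(t-bm)| - |t-bm|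
        have h3 : |(t - b n) - (t - b m)| ≤ |t - b n| + |t - b m| := abs_sub _ _
        linarith
      linarith
    by_cases hall : ∀ n ∈ Finset.range N, a (t - b n) = 0
    · have hu0 : u t = 0 := by
        rw [hu]
        simp only
        apply Finset.sum_eq_zero
        intro n hn
        simpa [hb, sub_sub] using hall n hn
      rw [hu0]
      rw [Finset.sum_eq_zero]
      · simp
      · intro n hn; simp [hF, hall n hn]
    · push_neg at hall
      obtain ⟨n₀, hn₀mem, hn₀⟩ := hall
      have husum : u t = a (t - b n₀) := by
        rw [hu]
        simp only
        rw [Finset.sum_eq_single_of_mem n₀ hn₀mem]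
        · simp [hb, sub_sub]
        · intro m hm hmn
          have := hx n₀ m (fun h => hmn h.symm) hn₀
          simpa [hb, sub_sub] using this
      rw [husum, Finset.sum_eq_single_of_mem n₀ hn₀mem
        (fun m _ hmn => by simp [hF, hx n₀ m (fun h => hmn h.symm) hn₀])]
  -- main integral identity
  have hmain : (∫ t : ℝ, (t - c) ^ 2 * ‖u t‖ ^ 2)
      = N * M + T ^ 2 * ((N : ℝ) ^ 2 - 1) / 12 := by
    have h1 : (∫ t : ℝ, (t - c) ^ 2 * ‖u t‖ ^ 2)
        = ∑ n ∈ Finset.range N, ∫ t : ℝ, F n t := by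
      rw [← integral_finset_sum _ (fun n _ => hF_int n)]
      exact integral_congr_ae (Filter.Eventually.of_forall hpt)
    rw [h1]
    have h2 : ∑ n ∈ Finset.range N, ∫ t : ℝ, F n t
        = ∑ n ∈ Finset.range N, (M + (c - b n) ^ 2 / N) := by
      exact Finset.sum_congr rfl (fun n _ => hF_val n)
    rw [h2, Finset.sum_add_distrib, Finset.sum_const, Finset.card_range, nsmul_eq_mul]
    have h3 : ∀ n ∈ Finset.range N, (c - b n) ^ 2 / (N : ℝ)
        = (T * ((N : ℝ) - 1) / 2 - (n : ℝ) * T) ^ 2 / (N : ℝ) := by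
      intro n _
      congr 2
      simp only [hc, hb]; ring
    rw [Finset.sum_congr rfl h3, ← Finset.sum_div, sum_center_sq]
    field_simp
  rw [hmain]
  constructor
  · nlinarith
  · have hNM : (N : ℝ) * M ≤ Ta ^ 2 / 4 := by
      have := mul_le_mul_of_nonneg_left ha_moment (le_of_lt hNpos)
      calc (N : ℝ) * M ≤ (N : ℝ) * (Ta ^ 2 / (4 * N)) := this
        _ = Ta ^ 2 / 4 := by field_simp
    linarith
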